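/- arXiv:alg-geom/9703031 — 5 statements merged into one kernel-verified Lean document; each statement's English description precedes it below -/
import Mathlib

section
/- Let m ≥ 2 and let f : ℂ^m \ {0} → M(n, ℂ) be a holomorphic map whose values all lie in GL(n, ℂ). Then the holomorphic extension f̃ : ℂ^m → M(n, ℂ) of f (which exists by Hartogs' extension theorem) satisfies f̃(0) ∈ GL(n, ℂ), i.e. det(f̃(0)) ≠ 0. -/
set_option maxHeartbeats 1000000

/-- If `f` is holomorphic on `ℂ^m \ {0}` (`m ≥ 2`) with values in
`GL(n, ℂ)`, and `ftilde` is a holomorphic extension of `f` to all of `ℂ^m`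
(which exists by Hartogs' extension theorem), then `ftilde 0` is invertible,
i.e. `det (ftilde 0) ≠ 0`. -/
theorem extension_invertible_at_zero (m n : ℕ) (hm : 2 ≤ m)
    (f ftilde : (Fin m → ℂ) → Matrix (Fin n) (Fin n) ℂ)
    (hf : ∀ i j, DifferentiableOn ℂ (fun z => f z i j) {0}ᶜ)
    (hfinv : ∀ z : Fin m → ℂ, z ≠ 0 → IsUnit (f z))
    (hft : ∀ i j, Differentiable ℂ (fun z => ftilde z i j))
    (hext : ∀ z : Fin m → ℂ, z ≠ 0 → ftilde z = f z) :
    (ftilde 0).det ≠ 0 := by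
  set g : (Fin m → ℂ) → ℂ := fun z => (ftilde z).det with hgdef
  -- g is entire
  have hgd : Differentiable ℂ g := by
    have : g = fun z => ∑ σ : Equiv.Perm (Fin n),
        ((Equiv.Perm.sign σ : ℤ) : ℂ) * ∏ i, ftilde z (σ i) i := by
      funext z
      simp [hgdef, Matrix.det_apply']
    rw [this]
    apply Differentiable.fun_sum
    intro σ _
    have hp : ∀ u : Finset (Fin n),
        Differentiable ℂ fun z : Fin m → ℂ => ∏ i ∈ u, ftilde z (σ i) i := by
      intro u
      induction u using Finset.induction with
      | empty => simpa using differentiable_const (1 : ℂ)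
      | insert _ _ hx ih =>
        simp only [Finset.prod_insert hx]
        exact (hft _ _).mul ih
    exact (differentiable_const _).mul (hp Finset.univ)
  -- g is nonzero off the origin
  have hgne : ∀ z : Fin m → ℂ, z ≠ 0 → g z ≠ 0 := by
    intro z hz
    have := ((Matrix.isUnit_iff_isUnit_det (f z)).mp (hfinv z hz))
    rw [hgdef]
    simp only [hext z hz]
    exact this.ne_zero
  by_contra h0
  have hg0 : g 0 = 0 := by rwa [hgdef]
  clear_value g
  clear hgdef
  -- the 2-plane slice
  have h2 : (0 : ℕ) < m := by omega
  have h2' : (1 : ℕ) < m := by omega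
  set i0 : Fin m := ⟨0, h2⟩
  set i1 : Fin m := ⟨1, h2'⟩
  have hii : i0 ≠ i1 := by simp [i0, i1, Fin.ext_iff]
  set L : ℂ → ℂ → (Fin m → ℂ) := fun ε w =>
    w • (Pi.single i0 1 : Fin m → ℂ) + ε • (Pi.single i1 1 : Fin m → ℂ) with hLdef
  have hL0 : ∀ ε w, L ε w i0 = w := by
    intro ε w
    simp [hLdef, Pi.single_eq_same, Pi.single_eq_of_ne hii, Pi.single_eq_of_ne hii.symm]
  have hL1 : ∀ ε w, L ε w i1 = ε := by
    intro ε w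
    simp [hLdef, Pi.single_eq_same, Pi.single_eq_of_ne hii, Pi.single_eq_of_ne hii.symm]
  have hLne : ∀ ε w : ℂ, w ≠ 0 → L ε w ≠ 0 := by
    intro ε w hw h
    exact hw (by rw [← hL0 ε w, h]; rfl)
  have hLne' : ∀ ε w : ℂ, ε ≠ 0 → L ε w ≠ 0 := by
    intro ε w hε h
    exact hε (by rw [← hL1 ε w, h]; rfl)
  have hLcont : Continuous fun p : ℂ × ℂ => L p.1 p.2 := by
    exact (continuous_snd.smul continuous_const).add
      (continuous_fst.smul continuous_const)
  have hLdiff : ∀ ε : ℂ, Differentiable ℂ fun w => L ε w := by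
    intro ε
    exact (differentiable_id.smul_const _).add_const _
  have hL00 : L 0 0 = 0 := by
    funext i
    simp [hLdef]
  clear_value L
  clear hLdef
  -- δ : min of ‖g‖ on the circle in the slice
  obtain ⟨x₀, hx₀, hmin'⟩ :=
    (isCompact_sphere (0 : ℂ) 1).exists_isMinOn
      (⟨1, by simp⟩ : (Metric.sphere (0 : ℂ) 1).Nonempty)
      (Continuous.continuousOn
        ((hgd.continuous.comp ((hLdiff 0).continuous)).norm))
  have hmin : ∀ w ∈ Metric.sphere (0 : ℂ) 1, ‖g (L 0 x₀)‖ ≤ ‖g (L 0 w)‖ :=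
    fun w hw => hmin' hw
  set δ : ℝ := ‖g (L 0 x₀)‖ with hδdef
  have hx₀ne : (x₀ : ℂ) ≠ 0 := by
    intro h
    rw [h] at hx₀
    simp at hx₀
  have hδpos : 0 < δ := norm_pos_iff.mpr (hgne _ (hLne 0 x₀ hx₀ne))
  -- tube lemma: for small ε, ‖g (L ε w)‖ > δ/2 on the circle
  have hopen : IsOpen {p : ℂ × ℂ | δ / 2 < ‖g (L p.1 p.2)‖} := by
    apply isOpen_lt continuous_const
    exact (hgd.continuous.comp hLcont).norm
  have hsub : ({0} : Set ℂ) ×ˢ Metric.sphere (0 : ℂ) 1 ⊆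
      {p : ℂ × ℂ | δ / 2 < ‖g (L p.1 p.2)‖} := by
    rintro ⟨ε, w⟩ ⟨hε, hw⟩
    simp only [Set.mem_singleton_iff] at hε
    subst hε
    have := hmin w hw
    simp only [Set.mem_setOf_eq]
    linarith
  obtain ⟨u, v, hu, hv, h0u, hsv, huv⟩ :=
    generalized_tube_lemma isCompact_singleton (isCompact_sphere (0 : ℂ) 1)
      hopen hsub
  obtain ⟨r, hr, hball⟩ := Metric.isOpen_iff.mp hu 0 (h0u rfl)
  -- for small ε ≠ 0, max modulus on (g ∘ L ε)⁻¹ gives ‖g (L ε 0)‖ ≥ δ/2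
  have key : ∀ ε : ℂ, ε ≠ 0 → ε ∈ Metric.ball (0 : ℂ) r →
      δ / 2 ≤ ‖g (L ε 0)‖ := by
    intro ε hε hεr
    have hne : ∀ w : ℂ, g (L ε w) ≠ 0 := fun w => hgne _ (hLne' ε w hε)
    have hFd : Differentiable ℂ fun w => (g (L ε w))⁻¹ :=
      ((hgd.comp (hLdiff ε)).inv hne)
    have hbound : ∀ w ∈ frontier (Metric.ball (0 : ℂ) 1),
        ‖(g (L ε w))⁻¹‖ ≤ (δ / 2)⁻¹ := by
      intro w hw
      rw [frontier_ball (0 : ℂ) one_ne_zero] at hw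
      have hlt : δ / 2 < ‖g (L ε w)‖ := huv (Set.mk_mem_prod (hball hεr) (hsv hw))
      rw [norm_inv]
      exact inv_anti₀ (by linarith) hlt.le
    have h0cl : (0 : ℂ) ∈ closure (Metric.ball (0 : ℂ) 1) :=
      subset_closure (Metric.mem_ball_self one_pos)
    have := Complex.norm_le_of_forall_mem_frontier_norm_le
      Metric.isBounded_ball hFd.diffContOnCl hbound h0cl
    rw [norm_inv] at this
    have hpos : 0 < ‖g (L ε 0)‖ := norm_pos_iff.mpr (hne 0)
    have := (inv_le_inv₀ hpos (by linarith : (0:ℝ) < δ / 2)).mp this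
    linarith
  -- contradiction with continuity at 0
  have hcont : Filter.Tendsto (fun ε : ℂ => ‖g (L ε 0)‖) (nhdsWithin 0 {(0:ℂ)}ᶜ)
      (nhds 0) := by
    have hc : Continuous fun ε : ℂ => ‖g (L ε 0)‖ := by
      exact ((hgd.continuous.comp (hLcont.comp
        (Continuous.prodMk continuous_id continuous_const))).norm)
    have := hc.tendsto (0 : ℂ)
    rw [show ‖g (L 0 0)‖ = 0 by rw [hL00, hg0, norm_zero]] at this
    exact this.mono_left nhdsWithin_le_nhds
  have hev : ∀ᶠ ε in nhdsWithin (0:ℂ) {(0:ℂ)}ᶜ, ‖g (L ε 0)‖ < δ / 2 :=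
    hcont.eventually (Filter.Tendsto.eventually_lt_const (by linarith) Filter.tendsto_id)
  have hev2 : ∀ᶠ ε in nhdsWithin (0:ℂ) {(0:ℂ)}ᶜ, δ / 2 ≤ ‖g (L ε 0)‖ := by
    filter_upwards [self_mem_nhdsWithin,
      eventually_nhdsWithin_of_eventually_nhds
        (Metric.eventually_nhds_iff_ball.mpr ⟨r, hr, fun y hy => hy⟩)] with ε h1 h2
    exact key ε h1 h2
  obtain ⟨ε, h1, h2⟩ := (hev.and hev2).exists
  linarith
end

section
/- Let m ≥ 2 and let f : ℂ^m \ {0} → GL(n, ℂ) be holomorphic (as a map into n × n matrices, taking invertible values). Then f is nullhomotopic as a continuous map into GL(n, ℂ). -/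
open Complex Metric Filter Set Function Topology Real

private lemma tendsto_of_diffOn' {m : ℕ} (hm : 2 ≤ m) (u : (Fin m → ℂ) → ℂ)
    (hu : DifferentiableOn ℂ u {0}ᶜ) :
    ∃ A : ℂ, Tendsto u (𝓝[{(0 : Fin m → ℂ)}ᶜ] 0) (𝓝 A) := by
  have hm0 : 0 < m := by omega
  have hm1 : 1 < m := by omega
  set i0 : Fin m := ⟨0, hm0⟩ with hi0
  set i1 : Fin m := ⟨1, hm1⟩ with hi1
  have hi01 : i1 ≠ i0 := by simp [hi0, hi1, Fin.ext_iff]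
  set e : (Fin m → ℂ) → ℂ → (Fin m → ℂ) := fun z w j => if j = i0 then w else z j with he
  have he_cont : Continuous fun p : (Fin m → ℂ) × ℂ => e p.1 p.2 := by
    apply continuous_pi; intro j
    by_cases h : j = i0
    · simpa [he, h] using continuous_snd
    · refine ((continuous_apply j).comp continuous_fst).congr ?_; intro p; simp [he, h]
  have he_cont1 : ∀ z, Continuous (e z) :=
    fun z => he_cont.comp (continuous_const.prodMk continuous_id)
  have he_cont2 : ∀ w, Continuous fun z => e z w :=
    fun w => he_cont.comp (continuous_id.prodMk continuous_const)
  have he_ne : ∀ z (w : ℂ), w ≠ 0 → e z w ≠ 0 := by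
    intro z w hw h0
    exact hw (by simpa [he] using congrFun h0 i0)
  have he_self : ∀ z, e z (z i0) = z := by
    intro z; funext j; by_cases h : j = i0 <;> simp [he, h]
  have hucont : ContinuousOn u {0}ᶜ := hu.continuousOn
  -- bound on compact set
  obtain ⟨C, hC⟩ : ∃ C, ∀ x ∈ (fun p : (Fin m → ℂ) × ℂ => e p.1 p.2) ''
      (closedBall 0 1 ×ˢ sphere (0 : ℂ) 1), ‖u x‖ ≤ C := by
    apply ((isCompact_closedBall _ _).prod (isCompact_sphere _ _)).image he_cont
      |>.exists_bound_of_continuousOn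
    apply hucont.mono
    rintro x ⟨⟨z, w⟩, ⟨-, hw⟩, rfl⟩
    refine he_ne z w ?_
    intro h
    rw [mem_sphere_zero_iff_norm, h] at hw
    simp at hw
  have hC0 : 0 ≤ C := by
    refine le_trans (norm_nonneg _) (hC _ ⟨(0, 1), ⟨?_, ?_⟩, rfl⟩)
    · simp
    · simp [mem_sphere_zero_iff_norm]
  set Φ : (Fin m → ℂ) → ℂ :=
    fun z => (2 * π * I : ℂ)⁻¹ • ∮ w in C(0, 1), (w - z i0)⁻¹ • u (e z w) with hΦ
  -- Cauchy formula
  have step2 : ∀ z : Fin m → ℂ, (∃ j, j ≠ i0 ∧ z j ≠ 0) → ‖z‖ < 1 → Φ z = u z := by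
    rintro z ⟨j, hj, hzj⟩ hz
    have hne : ∀ w : ℂ, e z w ≠ 0 := by
      intro w h0
      exact hzj (by simpa [he, hj] using congrFun h0 j)
    have hediff : Differentiable ℂ (e z) := by
      rw [show (e z) = fun w => e z w from rfl]
      apply differentiable_pi.2
      intro j'
      by_cases h : j' = i0
      · simpa [he, h] using differentiable_id
      · simpa [he, h] using differentiable_const _
    have hdiff : Differentiable ℂ fun w => u (e z w) := by
      intro w
      exact (hu.differentiableAt (isOpen_compl_singleton.mem_nhds (hne w))).comp w
        (hediff w)
    have hz0 : z i0 ∈ ball (0 : ℂ) 1 := by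
      rw [mem_ball_zero_iff]
      exact lt_of_le_of_lt (norm_le_pi_norm z i0) hz
    have := (hdiff.diffContOnCl).two_pi_i_inv_smul_circleIntegral_sub_inv_smul hz0
    simpa only [he_self z] using this
  -- norm bound on the circle denominator
  have hkey : ∀ z : Fin m → ℂ, ‖z‖ < 1 / 2 → ∀ θ : ℝ,
      (1 : ℝ) / 2 ≤ ‖circleMap 0 1 θ - z i0‖ := by
    intro z hz θ
    have h1 : ‖circleMap 0 1 θ‖ = 1 := by
      simp [norm_circleMap_zero]
    have h2 : ‖z i0‖ < 1 / 2 := lt_of_le_of_lt (norm_le_pi_norm z i0) hz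
    have := norm_sub_norm_le (circleMap 0 1 θ) (z i0)
    linarith
  have hmem : ∀ z : Fin m → ℂ, ‖z‖ ≤ 1 → ∀ θ : ℝ,
      e z (circleMap 0 1 θ) ∈ (fun p : (Fin m → ℂ) × ℂ => e p.1 p.2) ''
        (closedBall 0 1 ×ˢ sphere (0 : ℂ) 1) := by
    intro z hz θ
    refine ⟨(z, circleMap 0 1 θ), ⟨?_, ?_⟩, rfl⟩
    · simpa [mem_closedBall_zero_iff] using hz
    · simp [mem_sphere_zero_iff_norm, norm_circleMap_zero]
  have hcne : ∀ θ : ℝ, circleMap 0 1 θ ≠ 0 := by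
    intro θ h
    have : ‖circleMap 0 1 θ‖ = 1 := by
      simp [norm_circleMap_zero]
    rw [h] at this; simp at this
  have step1 : ∀ z₀ : Fin m → ℂ, ‖z₀‖ < 1 / 2 → ContinuousAt Φ z₀ := by
    intro z₀ hz₀
    have hG : ContinuousAt (fun z : Fin m → ℂ =>
        ∫ θ in (0:ℝ)..2 * π, (circleMap 0 1 θ * I) •
          ((circleMap 0 1 θ - z i0)⁻¹ • u (e z (circleMap 0 1 θ)))) z₀ := by
      apply intervalIntegral.continuousAt_of_dominated_interval
        (bound := fun _ : ℝ => 2 * C)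
      · filter_upwards [isOpen_ball.mem_nhds (mem_ball_zero_iff.2 hz₀)] with z hz
        rw [mem_ball_zero_iff] at hz
        apply Continuous.aestronglyMeasurable
        apply Continuous.fun_smul
        · exact (continuous_circleMap 0 1).mul continuous_const
        apply Continuous.fun_smul
        · apply Continuous.inv₀ ((continuous_circleMap 0 1).sub continuous_const)
          intro θ
          have := hkey z hz θ
          intro h0
          rw [show circleMap 0 1 θ - z i0 = 0 from h0] at this; norm_num at this
        · exact hucont.comp_continuous ((he_cont1 z).comp (continuous_circleMap 0 1))
            fun θ => he_ne _ _ (hcne θ)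
      · filter_upwards [isOpen_ball.mem_nhds (mem_ball_zero_iff.2 hz₀)] with z hz
        rw [mem_ball_zero_iff] at hz
        apply Filter.Eventually.of_forall
        intro θ _
        have hb1 : ‖circleMap 0 1 θ * I‖ = 1 := by
          simp [norm_circleMap_zero]
        have hb2 : ‖(circleMap 0 1 θ - z i0)⁻¹‖ ≤ 2 := by
          rw [norm_inv]
          have h := hkey z hz θ
          calc ‖circleMap 0 1 θ - z i0‖⁻¹ ≤ ((1:ℝ)/2)⁻¹ := by
                apply inv_anti₀ (by norm_num) h
            _ = 2 := by norm_num
        have hb3 : ‖u (e z (circleMap 0 1 θ))‖ ≤ C := hC _ (hmem z (hz.le.trans (by norm_num)) θ)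
        rw [norm_smul, norm_smul, hb1, one_mul]
        exact mul_le_mul hb2 hb3 (norm_nonneg _) (by norm_num)
      · exact intervalIntegrable_const
      · apply Filter.Eventually.of_forall
        intro θ _
        apply ContinuousAt.fun_smul continuousAt_const
        apply ContinuousAt.fun_smul
        · apply ContinuousAt.inv₀
            ((continuous_const.sub (continuous_apply i0)).continuousAt)
          have := hkey z₀ hz₀ θ
          intro h0
          rw [show circleMap 0 1 θ - z₀ i0 = 0 from h0] at this; norm_num at this
        · have h1 : ContinuousAt (fun z : Fin m → ℂ => e z (circleMap 0 1 θ)) z₀ :=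
            (he_cont2 (circleMap 0 1 θ)).continuousAt
          exact ContinuousAt.comp (x := z₀) (hucont.continuousAt
            (isOpen_compl_singleton.mem_nhds (he_ne z₀ _ (hcne θ)))) h1
    have hΦeq : Φ = fun z => (2 * ↑π * I : ℂ)⁻¹ •
        ∫ θ in (0:ℝ)..2 * π, (circleMap 0 1 θ * I) •
          ((circleMap 0 1 θ - z i0)⁻¹ • u (e z (circleMap 0 1 θ))) := by
      funext z
      rw [hΦ]
      simp only [circleIntegral, deriv_circleMap]
    rw [hΦeq]
    exact hG.fun_const_smul _
  have step3 : ∀ z : Fin m → ℂ, z ≠ 0 → ‖z‖ < 1 / 2 → Φ z = u z := by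
    intro z hz hzn
    by_cases hj : ∃ j, j ≠ i0 ∧ z j ≠ 0
    · exact step2 z hj (hzn.trans (by norm_num))
    · push_neg at hj
      set v : ℂ → (Fin m → ℂ) := fun t j => if j = i1 then t else z j with hv
      have hv_cont : Continuous v := by
        apply continuous_pi; intro j
        by_cases h : j = i1
        · simpa [hv, h] using continuous_id'
        · simpa [hv, h] using continuous_const
      have hv0 : v 0 = z := by
        funext j
        by_cases h : j = i1
        · simp [hv, h, (hj i1 hi01).symm]
        · simp [hv, h]
      have hveq : ∀ t : ℂ, t ≠ 0 → ‖t‖ < 1 → Φ (v t) = u (v t) := by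
        intro t ht htn
        apply step2
        · exact ⟨i1, hi01, by simpa [hv] using ht⟩
        · rw [pi_norm_lt_iff one_pos]
          intro j
          by_cases h : j = i1
          · simpa [hv, h] using htn
          · simp only [hv, h, if_false]
            exact lt_of_le_of_lt (norm_le_pi_norm z j) (hzn.trans (by norm_num))
      have hvt : Tendsto v (𝓝[≠] (0:ℂ)) (𝓝 z) := by
        have := hv_cont.tendsto 0
        rw [hv0] at this
        exact this.mono_left nhdsWithin_le_nhds
      have h1 : Tendsto (fun t => u (v t)) (𝓝[≠] (0:ℂ)) (𝓝 (u z)) :=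
        (hucont.continuousAt (isOpen_compl_singleton.mem_nhds hz)).tendsto.comp hvt
      have h2 : Tendsto (fun t => Φ (v t)) (𝓝[≠] (0:ℂ)) (𝓝 (Φ z)) :=
        (step1 z hzn).tendsto.comp hvt
      have h3 : (fun t => Φ (v t)) =ᶠ[𝓝[≠] (0:ℂ)] fun t => u (v t) := by
        have hsmall : ∀ᶠ t : ℂ in 𝓝[≠] (0:ℂ), ‖t‖ < 1 := by
          apply Filter.Eventually.filter_mono nhdsWithin_le_nhds
          filter_upwards [Metric.ball_mem_nhds (0:ℂ) one_pos] with t ht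
          simpa [mem_ball_zero_iff] using ht
        filter_upwards [self_mem_nhdsWithin, hsmall] with t ht htn
        exact hveq t ht htn
      exact tendsto_nhds_unique (h2.congr' h3) h1
  refine ⟨Φ 0, ?_⟩
  have h0 : Tendsto Φ (𝓝[{(0 : Fin m → ℂ)}ᶜ] 0) (𝓝 (Φ 0)) := by
    refine Filter.Tendsto.mono_left ?_ nhdsWithin_le_nhds
    exact (step1 0 (by simp)).tendsto
  apply h0.congr'
  have hsmall : ∀ᶠ z : Fin m → ℂ in 𝓝[{(0 : Fin m → ℂ)}ᶜ] 0, ‖z‖ < 1/2 := by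
    apply Filter.Eventually.filter_mono nhdsWithin_le_nhds
    filter_upwards [Metric.ball_mem_nhds (0 : Fin m → ℂ) (by norm_num : (0:ℝ) < 1/2)] with z hzb
    simpa [mem_ball_zero_iff] using hzb
  filter_upwards [self_mem_nhdsWithin, hsmall] with z hz hzn
  exact step3 z hz hzn

private lemma diffOn_prod' {m : ℕ} {ι : Type} (s : Finset ι)
    (f : ι → (Fin m → ℂ) → ℂ) (t : Set (Fin m → ℂ))
    (hf : ∀ i ∈ s, DifferentiableOn ℂ (f i) t) :
    DifferentiableOn ℂ (fun z => ∏ i ∈ s, f i z) t := by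
  classical
  induction s using Finset.induction_on with
  | empty => simpa using differentiableOn_const 1
  | insert _ _ hx ih =>
    rename_i a s'
    simp only [Finset.prod_insert hx]
    exact (hf a (Finset.mem_insert_self a s')).mul
      (ih fun i hi => hf i (Finset.mem_insert_of_mem hi))

private lemma diffOn_det' {m n : ℕ} (g : (Fin m → ℂ) → Matrix (Fin n) (Fin n) ℂ)
    (t : Set (Fin m → ℂ)) (hg : ∀ i j, DifferentiableOn ℂ (fun z => g z i j) t) :
    DifferentiableOn ℂ (fun z => (g z).det) t := by
  classical
  simp only [Matrix.det_apply']
  apply DifferentiableOn.fun_sum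
  intro σ _
  apply DifferentiableOn.const_mul
  exact diffOn_prod' Finset.univ (fun i z => g z (σ i) i) t fun i _ => hg (σ i) i


/-- A holomorphic map `f : ℂ^m \ {0} → GL(n, ℂ)` (`m ≥ 2`,
holomorphic as a map into `n × n` matrices, with invertible values) is
nullhomotopic as a continuous map into `GL(n, ℂ)`. -/
theorem holomorphic_into_GL_nullhomotopic (m n : ℕ) (hm : 2 ≤ m)
    (f : (Fin m → ℂ) → Matrix (Fin n) (Fin n) ℂ)
    (hf : ∀ i j, DifferentiableOn ℂ (fun z => f z i j) {0}ᶜ)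
    (hfinv : ∀ z : Fin m → ℂ, z ≠ 0 → IsUnit (f z))
    (fc : C({z : Fin m → ℂ // z ≠ 0}, {A : Matrix (Fin n) (Fin n) ℂ // IsUnit A}))
    (hfc : ∀ z : {z : Fin m → ℂ // z ≠ 0}, (fc z : Matrix (Fin n) (Fin n) ℂ) = f z.val) :
    fc.Nullhomotopic := by
  classical
  have hm0 : 0 < m := by omega
  haveI : Nontrivial (Fin m → ℂ) := by
    refine ⟨0, Function.const _ 1, fun h => ?_⟩
    have := congrFun h ⟨0, hm0⟩
    simp [Function.const] at this
  haveI hNB : (𝓝[{(0 : Fin m → ℂ)}ᶜ] 0).NeBot := Module.punctured_nhds_neBot ℂ (Fin m → ℂ) 0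
  set l := 𝓝[{(0 : Fin m → ℂ)}ᶜ] 0 with hl
  -- determinant is differentiable and nonvanishing
  have hdet : DifferentiableOn ℂ (fun z => (f z).det) {0}ᶜ := diffOn_det' f _ hf
  have hdetne : ∀ z : Fin m → ℂ, z ≠ 0 → (f z).det ≠ 0 := by
    intro z hz
    exact isUnit_iff_ne_zero.1 ((Matrix.isUnit_iff_isUnit_det _).1 (hfinv z hz))
  -- the inverse matrix has differentiable entries
  set g : (Fin m → ℂ) → Matrix (Fin n) (Fin n) ℂ := fun z => (f z)⁻¹ with hg
  have hginv : ∀ i j, DifferentiableOn ℂ (fun z => g z i j) {0}ᶜ := by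
    intro i j
    have heq : ∀ z : Fin m → ℂ, g z i j = ((f z).det)⁻¹ * (f z).adjugate i j := by
      intro z
      have h' : (f z)⁻¹ i j = ((f z).det)⁻¹ * (f z).adjugate i j := by
        rw [Matrix.inv_def, Ring.inverse_eq_inv, Matrix.smul_apply, smul_eq_mul]
      simpa [hg] using h'
    simp only [heq]
    apply DifferentiableOn.mul
    · exact hdet.inv fun z hz => hdetne z hz
    · have heq2 : ∀ z : Fin m → ℂ,
          (f z).adjugate i j = ((f z).updateRow j (Pi.single i 1)).det :=
        fun z => Matrix.adjugate_apply _ i j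
      simp only [heq2]
      apply diffOn_det'
      intro a b
      by_cases hab : a = j
      · subst hab
        simpa [Matrix.updateRow_apply] using differentiableOn_const _
      · simpa [Matrix.updateRow_apply, hab] using hf a b
  -- limits at the origin
  choose A hA using fun i j => tendsto_of_diffOn' hm _ (hf i j)
  choose B hB using fun i j => tendsto_of_diffOn' hm _ (hginv i j)
  set AM : Matrix (Fin n) (Fin n) ℂ := Matrix.of A with hAM
  set BM : Matrix (Fin n) (Fin n) ℂ := Matrix.of B with hBM
  have hAf : Tendsto f l (𝓝 AM) :=
    tendsto_pi_nhds.2 fun i => tendsto_pi_nhds.2 fun j => hA i j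
  have hBg : Tendsto g l (𝓝 BM) :=
    tendsto_pi_nhds.2 fun i => tendsto_pi_nhds.2 fun j => hB i j
  have hmul : Tendsto (fun z => f z * g z) l (𝓝 (AM * BM)) := hAf.mul hBg
  have hone : (fun z : Fin m → ℂ => f z * g z) =ᶠ[l] fun _ => 1 := by
    filter_upwards [self_mem_nhdsWithin] with z hz
    exact Matrix.mul_nonsing_inv (f z) (isUnit_iff_ne_zero.2 (hdetne z hz))
  have hABone : AM * BM = 1 := tendsto_nhds_unique (hmul.congr' hone) tendsto_const_nhds
  have hAunit : IsUnit AM := (Matrix.isUnit_iff_isUnit_det _).2 (Matrix.isUnit_det_of_right_inverse hABone)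
  -- the continuous extension
  set F : (Fin m → ℂ) → Matrix (Fin n) (Fin n) ℂ :=
    fun z => if z = 0 then AM else f z with hF
  have hF0 : F 0 = AM := by simp [hF]
  have hFz : ∀ z : Fin m → ℂ, z ≠ 0 → F z = f z := fun z hz => by simp [hF, hz]
  have hfcont : ContinuousOn f {0}ᶜ :=
    continuousOn_pi.2 fun i => continuousOn_pi.2 fun j => (hf i j).continuousOn
  have hFcont : Continuous F := by
    rw [continuous_iff_continuousAt]
    intro z
    by_cases hz : z = 0
    · subst hz
      have h1 : Tendsto F l (𝓝 AM) := by
        apply hAf.congr'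
        filter_upwards [self_mem_nhdsWithin] with z hz
        exact (hFz z hz).symm
      rw [ContinuousAt, hF0, ← nhdsNE_sup_pure (0 : Fin m → ℂ),
        tendsto_sup]
      exact ⟨h1, by rw [tendsto_pure_left]; intro s hs; simpa [hF0] using mem_of_mem_nhds hs⟩
    · have heq : f =ᶠ[𝓝 z] F := by
        filter_upwards [isOpen_compl_singleton.mem_nhds hz] with y hy
        exact (hFz y hy).symm
      exact (hfcont.continuousAt (isOpen_compl_singleton.mem_nhds hz)).congr heq
  have hFunit : ∀ z : Fin m → ℂ, IsUnit (F z) := by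
    intro z
    by_cases hz : z = 0
    · subst hz; rw [hF0]; exact hAunit
    · rw [hFz z hz]; exact hfinv z hz
  -- build the nullhomotopy
  refine ⟨⟨AM, hAunit⟩, ?_⟩
  refine ⟨{ toFun := fun p => ⟨F ((1 - (p.1 : ℝ)) • p.2.val), hFunit _⟩
            continuous_toFun := ?_
            map_zero_left := ?_
            map_one_left := ?_ }⟩
  · apply Continuous.subtype_mk
    apply hFcont.comp
    exact (continuous_const.sub (continuous_subtype_val.comp continuous_fst)).smul
      (continuous_subtype_val.comp continuous_snd)
  · intro z
    apply Subtype.ext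
    simp only [Set.Icc.coe_zero, sub_zero, one_smul]
    rw [hFz _ z.prop, ← hfc z]
  · intro z
    apply Subtype.ext
    simp only [Set.Icc.coe_one, sub_self, zero_smul]
    simpa using hF0
end

section
/- Any two continuous maps C → GL(n, ℂ) that arise as restrictions of holomorphic maps on C = ℂ^m \ {0} with m ≥ 2 are homotopic. More precisely: if g₀, g₁ : ℂ^m \ {0} → GL(n, ℂ) are holomorphic (m ≥ 2), then g₀ and g₁ are homotopic as continuous maps. -/
open Complex Metric Function Set Filter Polynomial Topology

namespace HoloGLAux

variable {n : ℕ}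

lemma differentiable_det {f : ℂ → Matrix (Fin n) (Fin n) ℂ}
    (hf : ∀ i j, Differentiable ℂ (fun w => f w i j)) :
    Differentiable ℂ (fun w => (f w).det) := by
  simp only [Matrix.det_apply']
  exact Differentiable.fun_sum fun σ _ =>
    (Differentiable.fun_finset_prod (u := Finset.univ) fun i _ => hf (σ i) i).const_mul _

lemma joined_units (A : Matrix (Fin n) (Fin n) ℂ) (hA : IsUnit A) :
    JoinedIn {M : Matrix (Fin n) (Fin n) ℂ | IsUnit M} 1 A := by
  classical
  set μ : ℂ → Matrix (Fin n) (Fin n) ℂ :=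
    fun z => z • A + (1 - z) • (1 : Matrix (Fin n) (Fin n) ℂ) with hμ
  have hμcont : Continuous μ := by
    apply Continuous.add
    · exact continuous_id.smul continuous_const
    · exact (continuous_const.sub continuous_id).smul continuous_const
  set p : Polynomial ℂ :=
    ((Polynomial.X : ℂ[X]) • A.map Polynomial.C
      + ((1 : ℂ[X]) - Polynomial.X) • (1 : Matrix (Fin n) (Fin n) ℂ[X])).det with hp
  have heval : ∀ z : ℂ, p.eval z = (μ z).det := by
    intro z
    have h1 := RingHom.map_det (Polynomial.evalRingHom z)
      ((Polynomial.X : ℂ[X]) • A.map Polynomial.C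
        + ((1 : ℂ[X]) - Polynomial.X) • (1 : Matrix (Fin n) (Fin n) ℂ[X]))
    have h2 : (((Polynomial.X : ℂ[X]) • A.map Polynomial.C
        + ((1 : ℂ[X]) - Polynomial.X) • (1 : Matrix (Fin n) (Fin n) ℂ[X])).map
          (Polynomial.evalRingHom z)) = μ z := by
      ext i j
      by_cases h : i = j <;>
        simp [hμ, Matrix.map_apply, Matrix.add_apply, Matrix.smul_apply, Matrix.one_apply, h] <;>
        ring
    calc p.eval z = (((Polynomial.X : ℂ[X]) • A.map Polynomial.C
          + ((1 : ℂ[X]) - Polynomial.X) • (1 : Matrix (Fin n) (Fin n) ℂ[X])).map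
            (Polynomial.evalRingHom z)).det := by
          rw [← RingHom.mapMatrix_apply]; exact h1
      _ = (μ z).det := by rw [h2]
  have hdetA : A.det ≠ 0 := by
    intro h
    have := (Matrix.isUnit_iff_isUnit_det A).1 hA
    rw [h] at this
    simp at this
  have hpne : p ≠ 0 := by
    intro h
    have h1 := heval 1
    rw [h] at h1
    simp [hμ] at h1
    exact hdetA h1.symm
  have hroots : Set.Countable {z : ℂ | p.IsRoot z} :=
    (Polynomial.finite_setOf_isRoot hpne).countable
  have hpc : IsPathConnected {z : ℂ | p.IsRoot z}ᶜ :=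
    hroots.isPathConnected_compl_of_one_lt_rank (by rw [rank_real_complex]; norm_num)
  have h0 : (0 : ℂ) ∈ {z : ℂ | p.IsRoot z}ᶜ := by
    simp only [mem_compl_iff, mem_setOf_eq, Polynomial.IsRoot]
    rw [heval 0]
    simp [hμ]
  have h1 : (1 : ℂ) ∈ {z : ℂ | p.IsRoot z}ᶜ := by
    simp only [mem_compl_iff, mem_setOf_eq, Polynomial.IsRoot]
    rw [heval 1]
    simp [hμ, hdetA]
  obtain ⟨γ, hγ⟩ := hpc.joinedIn 0 h0 1 h1
  have e0 : (1 : Matrix (Fin n) (Fin n) ℂ) = μ 0 := by simp [hμ]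
  have e1 : A = μ 1 := by simp [hμ]
  refine ⟨(γ.map hμcont).cast e0 e1, ?_⟩
  intro t
  have ht := hγ t
  simp only [mem_compl_iff, mem_setOf_eq, Polynomial.IsRoot] at ht
  rw [heval (γ t)] at ht
  simp only [Path.cast_coe, Path.map_coe, Function.comp_apply, mem_setOf_eq]
  exact (Matrix.isUnit_iff_isUnit_det _).2 (isUnit_iff_ne_zero.2 ht)

lemma const_homotopic {X : Type*} [TopologicalSpace X]
    (c₀ c₁ : {A : Matrix (Fin n) (Fin n) ℂ // IsUnit A}) :
    (ContinuousMap.const X c₀).Homotopic (ContinuousMap.const X c₁) := by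
  have j0 : Joined (⟨(1 : Matrix (Fin n) (Fin n) ℂ), isUnit_one⟩ :
      {A : Matrix (Fin n) (Fin n) ℂ // IsUnit A}) c₀ := by
    have := (joined_units c₀.1 c₀.2).joined_subtype
    exact this
  have j1 : Joined (⟨(1 : Matrix (Fin n) (Fin n) ℂ), isUnit_one⟩ :
      {A : Matrix (Fin n) (Fin n) ℂ // IsUnit A}) c₁ := by
    have := (joined_units c₁.1 c₁.2).joined_subtype
    exact this
  obtain ⟨γ⟩ := j0.symm.trans j1
  exact ⟨{ toFun := fun q => γ q.1
           continuous_toFun := γ.continuous.comp continuous_fst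
           map_zero_left := fun x => γ.source
           map_one_left := fun x => γ.target }⟩

lemma differentiable_det_aux {n : ℕ} {f : ℂ → Matrix (Fin n) (Fin n) ℂ}
    (hf : ∀ i j, Differentiable ℂ (fun w => f w i j)) :
    Differentiable ℂ (fun w => (f w).det) := by
  simp only [Matrix.det_apply']
  exact Differentiable.fun_sum fun σ _ =>
    (Differentiable.fun_finset_prod (u := Finset.univ) fun i _ => hf (σ i) i).const_mul _

lemma nullhomotopic (m n : ℕ) (hm : 2 ≤ m)
    (g : (Fin m → ℂ) → Matrix (Fin n) (Fin n) ℂ)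
    (hg : ∀ i j, DifferentiableOn ℂ (fun z => g z i j) {0}ᶜ)
    (hginv : ∀ z : Fin m → ℂ, z ≠ 0 → IsUnit (g z))
    (gc : C({z : Fin m → ℂ // z ≠ 0}, {A : Matrix (Fin n) (Fin n) ℂ // IsUnit A}))
    (hgc : ∀ z : {z : Fin m → ℂ // z ≠ 0}, (gc z : Matrix (Fin n) (Fin n) ℂ) = g z.val) :
    ∃ c, gc.Homotopic (ContinuousMap.const _ c) := by
  classical
  haveI : NeZero m := ⟨by omega⟩
  -- the second coordinate
  set i₁ : Fin m := ⟨1, by omega⟩ with hi₁def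
  have hi₁ : i₁ ≠ 0 := by
    intro h
    have := congrArg Fin.val h
    simp [hi₁def] at this
  -- updates with nonzero first coordinate are nonzero
  have hupd_ne : ∀ (y : Fin m → ℂ) (w : ℂ), w ≠ 0 → Function.update y 0 w ≠ 0 := by
    intro y w hw h
    apply hw
    have := congrFun h 0
    simpa using this
  have hupd_ne' : ∀ (y : Fin m → ℂ), Function.update y 0 (0:ℂ) ≠ 0 → ∀ w : ℂ,
      Function.update y 0 w ≠ 0 := by
    intro y hy w h
    rcases eq_or_ne w 0 with hw | hw
    · rw [hw] at h; exact hy h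
    · exact hupd_ne y w hw h
  -- the affine slice map
  have hline : ∀ y : Fin m → ℂ, (fun w : ℂ => Function.update y 0 w)
      = fun w : ℂ => Function.update y 0 (0:ℂ) + w • (Pi.single 0 1 : Fin m → ℂ) := by
    intro y
    funext w i
    by_cases hi : i = 0 <;> simp [Function.update_apply, Pi.single_apply, hi]
  -- slices are entire
  have hslice : ∀ (y : Fin m → ℂ) (i j : Fin n), Function.update y 0 (0:ℂ) ≠ 0 →
      Differentiable ℂ (fun w : ℂ => g (Function.update y 0 w) i j) := by
    intro y i j hy w
    have h1 : DifferentiableAt ℂ (fun w : ℂ => Function.update y 0 w) w := by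
      rw [hline y]
      exact (differentiableAt_id.smul_const _).const_add _
    have h2 : DifferentiableAt ℂ (fun z => g z i j) (Function.update y 0 w) :=
      (hg i j).differentiableAt (isOpen_compl_singleton.mem_nhds (hupd_ne' y hy w))
    exact h2.comp w h1
  -- continuity of g off 0
  have hgcont : ContinuousOn g {0}ᶜ :=
    continuousOn_iff_continuous_restrict.2 (continuous_matrix fun i j =>
      continuousOn_iff_continuous_restrict.1 (hg i j).continuousOn)
  -- the Cauchy-integral extension
  set Fm : (Fin m → ℂ) → Matrix (Fin n) (Fin n) ℂ := fun z i j =>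
    (2 * Real.pi * I)⁻¹ *
      ∮ ζ in C(0, 1), (ζ - z 0)⁻¹ • g (Function.update z 0 ζ) i j with hFm
  set V : Set (Fin m → ℂ) := {z | ‖z 0‖ < 1} with hV
  have hVopen : IsOpen V := isOpen_lt ((continuous_apply (0 : Fin m)).norm) continuous_const
  have h0V : (0 : Fin m → ℂ) ∈ V := by simp [hV, Pi.zero_apply]
  have hFmcont : ContinuousOn Fm V := by
    rw [continuousOn_iff_continuous_restrict]
    apply continuous_matrix
    intro i j
    show Continuous fun v : V => (2 * Real.pi * I : ℂ)⁻¹ *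
      ∮ ζ in C(0, 1), (ζ - v.val 0)⁻¹ • g (Function.update v.val 0 ζ) i j
    have hcm : Continuous fun p : V × ℝ => circleMap 0 1 p.2 :=
      (continuous_circleMap 0 1).comp continuous_snd
    have hcoord : Continuous fun p : V × ℝ => p.1.val 0 :=
      (continuous_apply (0 : Fin m)).comp (continuous_subtype_val.comp continuous_fst)
    have habs : ∀ θ : ℝ, ‖circleMap 0 1 θ‖ = 1 := by
      intro θ
      simpa using norm_circleMap_zero 1 θ
    have hsub_ne : ∀ p : V × ℝ, circleMap 0 1 p.2 - p.1.val 0 ≠ 0 := by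
      intro p h
      rw [sub_eq_zero] at h
      have h2 : ‖p.1.val 0‖ < 1 := p.1.2
      rw [← h, habs] at h2
      exact lt_irrefl _ h2
    have hupdc : Continuous fun p : V × ℝ => Function.update p.1.val 0 (circleMap 0 1 p.2) := by
      apply continuous_pi
      intro k
      by_cases hk : k = (0 : Fin m)
      · subst hk
        simp only [Function.update_apply, if_pos rfl]
        exact hcm
      · simp only [Function.update_apply, if_neg hk]
        exact (continuous_apply k).comp (continuous_subtype_val.comp continuous_fst)
    have hgval : Continuous fun p : V × ℝ => g (Function.update p.1.val 0 (circleMap 0 1 p.2)) i j := by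
      refine ((hg i j).continuousOn).comp_continuous hupdc ?_
      intro p
      apply hupd_ne
      intro h
      have := habs p.2
      rw [h] at this
      simp at this
    have hint : Continuous fun v : V =>
        ∫ θ in (0:ℝ)..(2 * Real.pi), deriv (circleMap 0 1) θ •
          ((circleMap 0 1 θ - v.val 0)⁻¹ • g (Function.update v.val 0 (circleMap 0 1 θ)) i j) := by
      apply intervalIntegral.continuous_parametric_intervalIntegral_of_continuous'
      show Continuous fun p : V × ℝ => deriv (circleMap 0 1) p.2 •
          ((circleMap 0 1 p.2 - p.1.val 0)⁻¹ • g (Function.update p.1.val 0 (circleMap 0 1 p.2)) i j)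
      simp only [deriv_circleMap]
      exact ((hcm.mul continuous_const).smul
        (((hcm.sub hcoord).inv₀ hsub_ne).smul hgval))
    exact continuous_const.mul hint
  have hFmeq₁ : ∀ z : Fin m → ℂ, z ∈ V → Function.update z 0 (0:ℂ) ≠ 0 → Fm z = g z := by
    intro z hzV hz'
    funext i j
    have hw : z 0 ∈ ball (0:ℂ) 1 := by
      rw [mem_ball_zero_iff]
      exact hzV
    have hcau := Complex.two_pi_I_inv_smul_circleIntegral_sub_inv_smul_of_differentiable_on_off_countable
      (s := (∅ : Set ℂ)) countable_empty hw
      ((hslice z i j hz').continuous.continuousOn)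
      (fun x _ => (hslice z i j hz') x)
    rw [Function.update_eq_self] at hcau
    show (2 * Real.pi * I : ℂ)⁻¹ *
      (∮ ζ in C(0, 1), (ζ - z 0)⁻¹ • g (Function.update z 0 ζ) i j) = g z i j
    rw [← hcau, smul_eq_mul]
  -- a sequence of nonzero perturbations
  have hεlim : Filter.Tendsto (fun k : ℕ => ((1 / ((k:ℝ) + 1) : ℝ) : ℂ)) atTop (𝓝 0) := by
    have h1 : Filter.Tendsto (fun k : ℕ => (1 / ((k:ℝ) + 1) : ℝ)) atTop (𝓝 0) :=
      tendsto_one_div_add_atTop_nhds_zero_nat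
    have h2 := (Complex.continuous_ofReal.tendsto 0).comp h1
    simpa [Function.comp_def] using h2
  have hεne : ∀ k : ℕ, ((1 / ((k:ℝ) + 1) : ℝ) : ℂ) ≠ 0 := by
    intro k
    rw [Complex.ofReal_ne_zero]
    positivity
  have hεle : ∀ k : ℕ, ‖((1 / ((k:ℝ) + 1) : ℝ) : ℂ)‖ ≤ 1 := by
    intro k
    rw [Complex.norm_real, Real.norm_eq_abs, abs_of_pos (by positivity)]
    rw [div_le_one (by positivity)]
    linarith [Nat.cast_nonneg (α := ℝ) k]
  have hFmeq : ∀ z : Fin m → ℂ, z ∈ V → z ≠ 0 → Fm z = g z := by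
    intro z hzV hz
    by_cases hz' : Function.update z 0 (0:ℂ) ≠ 0
    · exact hFmeq₁ z hzV hz'
    push_neg at hz'
    -- all coordinates except 0 vanish; in particular z i₁ = 0 and z 0 ≠ 0
    have hzi₁ : z i₁ = 0 := by
      have := congrFun hz' i₁
      simpa [Function.update_apply, hi₁] using this
    set zk : ℕ → (Fin m → ℂ) :=
      fun k => z + ((1 / ((k:ℝ) + 1) : ℝ) : ℂ) • (Pi.single i₁ 1 : Fin m → ℂ) with hzk
    have hzk0 : ∀ k, zk k 0 = z 0 := by
      intro k
      simp [hzk, Pi.single_apply, Ne.symm hi₁]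
    have hzki₁ : ∀ k, zk k i₁ = ((1 / ((k:ℝ) + 1) : ℝ) : ℂ) := by
      intro k
      simp [hzk, Pi.single_apply, hzi₁]
    have hzkV : ∀ k, zk k ∈ V := by
      intro k
      show ‖zk k 0‖ < 1
      rw [hzk0]
      exact hzV
    have hzk' : ∀ k, Function.update (zk k) 0 (0:ℂ) ≠ 0 := by
      intro k h
      have := congrFun h i₁
      rw [Function.update_apply, if_neg hi₁, hzki₁] at this
      exact hεne k this
    have hzkne : ∀ k, zk k ≠ 0 := by
      intro k h
      apply hεne k
      rw [← hzki₁ k, h]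
      simp
    have hlim : Filter.Tendsto zk atTop (𝓝 z) := by
      have : Filter.Tendsto (fun k : ℕ =>
          ((1 / ((k:ℝ) + 1) : ℝ) : ℂ) • (Pi.single i₁ 1 : Fin m → ℂ)) atTop
          (𝓝 (0 : Fin m → ℂ)) := by
        have := hεlim.smul_const (Pi.single i₁ 1 : Fin m → ℂ)
        simpa using this
      have h2 := (tendsto_const_nhds (x := z) (f := atTop (α := ℕ))).add this
      rw [hzk]
      simpa using h2
    have hFlim : Filter.Tendsto (fun k => Fm (zk k)) atTop (𝓝 (Fm z)) :=
      ((hFmcont.continuousAt (hVopen.mem_nhds hzV)).tendsto).comp hlim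
    have hglim : Filter.Tendsto (fun k => g (zk k)) atTop (𝓝 (g z)) :=
      ((hgcont.continuousAt (isOpen_compl_singleton.mem_nhds hz)).tendsto).comp hlim
    have heq : ∀ k, Fm (zk k) = g (zk k) := fun k => hFmeq₁ (zk k) (hzkV k) (hzk' k)
    exact tendsto_nhds_unique (hFlim.congr heq) hglim
  -- the extension
  set G : (Fin m → ℂ) → Matrix (Fin n) (Fin n) ℂ := fun z => if z = 0 then Fm 0 else g z with hG
  have hGeq : ∀ z : Fin m → ℂ, z ≠ 0 → G z = g z := fun z hz => if_neg hz
  have hGcont : Continuous G := by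
    rw [continuous_iff_continuousAt]
    intro z
    rcases eq_or_ne z 0 with hz | hz
    · subst hz
      have hFat : ContinuousAt Fm 0 := hFmcont.continuousAt (hVopen.mem_nhds h0V)
      apply hFat.congr
      filter_upwards [hVopen.mem_nhds h0V] with z' hz'
      rcases eq_or_ne z' 0 with h | h
      · subst h
        simp [hG]
      · rw [hG]
        simp only [if_neg h]
        exact hFmeq z' hz' h
    · have hgat : ContinuousAt g z := hgcont.continuousAt (isOpen_compl_singleton.mem_nhds hz)
      apply hgat.congr
      have hmem : {(0 : Fin m → ℂ)}ᶜ ∈ 𝓝 z := isOpen_compl_singleton.mem_nhds hz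
      filter_upwards [hmem] with z' hz'
      have hz'' : z' ≠ 0 := hz'
      rw [hG]
      simp only [if_neg hz'']
  -- the compact "torus-like" set
  set K : Set (Fin m → ℂ) := {z | ‖z 0‖ = 1 ∧ ∀ i, ‖z i‖ ≤ 1} with hK
  have hKne : K.Nonempty := by
    refine ⟨(Pi.single 0 1 : Fin m → ℂ), ?_, ?_⟩
    · simp [Pi.single_apply]
    · intro i
      rcases eq_or_ne i 0 with hi | hi <;> simp [Pi.single_apply, hi]
  have hKclosed : IsClosed K := by
    have : K = {z : Fin m → ℂ | ‖z 0‖ = 1} ∩ ⋂ i, {z : Fin m → ℂ | ‖z i‖ ≤ 1} := by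
      ext z
      simp [hK, Set.mem_iInter]
    rw [this]
    exact (isClosed_eq ((continuous_apply (0 : Fin m)).norm) continuous_const).inter
      (isClosed_iInter fun i => isClosed_le ((continuous_apply i).norm) continuous_const)
  have hKbdd : Bornology.IsBounded K := by
    apply (Metric.isBounded_closedBall (x := (0 : Fin m → ℂ)) (r := 1)).subset
    intro z hz
    rw [Metric.mem_closedBall, dist_zero_right]
    exact (pi_norm_le_iff_of_nonneg zero_le_one).2 hz.2
  have hKcompact : IsCompact K := Metric.isCompact_of_isClosed_isBounded hKclosed hKbdd
  have hKne0 : ∀ z ∈ K, z ≠ (0 : Fin m → ℂ) := by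
    intro z hz h
    have := hz.1
    rw [h] at this
    simp at this
  have hdetcont : ContinuousOn (fun z : Fin m → ℂ => ‖(g z).det‖) {0}ᶜ :=
    (continuous_id.matrix_det.norm).comp_continuousOn hgcont
  obtain ⟨z₀, hz₀K, hz₀min⟩ := hKcompact.exists_isMinOn hKne
    (hdetcont.mono (fun z hz => hKne0 z hz))
  set m₀ : ℝ := ‖(g z₀).det‖ with hm₀
  have hm₀pos : 0 < m₀ := by
    rw [hm₀, norm_pos_iff]
    intro h
    have := (Matrix.isUnit_iff_isUnit_det _).1 (hginv z₀ (hKne0 z₀ hz₀K))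
    rw [h] at this
    simp at this
  -- the minimum modulus estimate on slices
  have hC1 : ∀ y : Fin m → ℂ, (∀ i, ‖y i‖ ≤ 1) → Function.update y 0 (0:ℂ) ≠ 0 →
      ∀ w ∈ closedBall (0:ℂ) 1, m₀ ≤ ‖(g (Function.update y 0 w)).det‖ := by
    intro y hy hy' w hw
    have hdet_ne : ∀ w : ℂ, (g (Function.update y 0 w)).det ≠ 0 := by
      intro w h
      have := (Matrix.isUnit_iff_isUnit_det _).1 (hginv _ (hupd_ne' y hy' w))
      rw [h] at this
      simp at this
    have hφdiff : Differentiable ℂ fun w : ℂ => ((g (Function.update y 0 w)).det)⁻¹ := by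
      apply Differentiable.inv
      · exact differentiable_det_aux (fun i j => hslice y i j hy')
      · exact hdet_ne
    have hbound : ∀ ζ ∈ frontier (ball (0:ℂ) 1),
        ‖((g (Function.update y 0 ζ)).det)⁻¹‖ ≤ m₀⁻¹ := by
      intro ζ hζ
      rw [frontier_ball (0:ℂ) one_ne_zero, mem_sphere_zero_iff_norm] at hζ
      have hmem : Function.update y 0 ζ ∈ K := by
        constructor
        · rw [Function.update_apply, if_pos rfl]
          exact hζ
        · intro i
          rcases eq_or_ne i 0 with hi | hi
          · rw [hi, Function.update_apply, if_pos rfl, hζ]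
          · rw [Function.update_apply, if_neg hi]
            exact hy i
      have hmin := isMinOn_iff.1 hz₀min _ hmem
      rw [norm_inv]
      exact inv_anti₀ hm₀pos hmin
    have hw' : w ∈ closure (ball (0:ℂ) 1) := by
      rw [closure_ball (0:ℂ) one_ne_zero]
      exact hw
    have := Complex.norm_le_of_forall_mem_frontier_norm_le isBounded_ball
      hφdiff.diffContOnCl hbound hw'
    rw [norm_inv] at this
    have hpos : 0 < ‖(g (Function.update y 0 w)).det‖ := norm_pos_iff.2 (hdet_ne w)
    calc m₀ = (m₀⁻¹)⁻¹ := (inv_inv m₀).symm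
    _ ≤ (‖(g (Function.update y 0 w)).det‖⁻¹)⁻¹ := by
        apply inv_anti₀ (by positivity) this
    _ = ‖(g (Function.update y 0 w)).det‖ := inv_inv _
  -- conclude invertibility at 0 by taking a limit
  have hG0det : m₀ ≤ ‖(G 0).det‖ := by
    set zk : ℕ → (Fin m → ℂ) :=
      fun k => ((1 / ((k:ℝ) + 1) : ℝ) : ℂ) • (Pi.single i₁ 1 : Fin m → ℂ) with hzk
    have hzk0 : ∀ k, zk k 0 = 0 := by
      intro k
      simp [hzk, Pi.single_apply, Ne.symm hi₁]
    have hzki₁ : ∀ k, zk k i₁ = ((1 / ((k:ℝ) + 1) : ℝ) : ℂ) := by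
      intro k
      simp [hzk, Pi.single_apply]
    have hzkle : ∀ k, ∀ i, ‖zk k i‖ ≤ 1 := by
      intro k i
      rcases eq_or_ne i i₁ with hi | hi
      · rw [hi, hzki₁]
        exact hεle k
      · simp [hzk, Pi.single_apply, hi]
    have hzkupd : ∀ k, Function.update (zk k) 0 (0:ℂ) = zk k := by
      intro k
      rw [← hzk0 k, Function.update_eq_self]
    have hzkne' : ∀ k, Function.update (zk k) 0 (0:ℂ) ≠ 0 := by
      intro k h
      rw [hzkupd k] at h
      apply hεne k
      rw [← hzki₁ k, h]
      simp
    have hzkne : ∀ k, zk k ≠ 0 := by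
      intro k h
      exact hzkne' k (by rw [hzkupd k]; exact h)
    have hest : ∀ k, m₀ ≤ ‖(G (zk k)).det‖ := by
      intro k
      have := hC1 (zk k) (hzkle k) (hzkne' k) 0 (by simp)
      rw [hzkupd k] at this
      rw [hGeq (zk k) (hzkne k)]
      exact this
    have hlim : Filter.Tendsto zk atTop (𝓝 (0 : Fin m → ℂ)) := by
      have := hεlim.smul_const (Pi.single i₁ 1 : Fin m → ℂ)
      rw [hzk]
      simpa using this
    have hcont : Filter.Tendsto (fun k => ‖(G (zk k)).det‖) atTop (𝓝 (‖(G 0).det‖)) :=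
      ((hGcont.matrix_det.norm).tendsto 0).comp hlim
    exact ge_of_tendsto' hcont hest
  have hGunit : ∀ z : Fin m → ℂ, IsUnit (G z) := by
    intro z
    rcases eq_or_ne z 0 with hz | hz
    · subst hz
      apply (Matrix.isUnit_iff_isUnit_det _).2
      apply isUnit_iff_ne_zero.2
      intro h
      rw [h] at hG0det
      simp at hG0det
      exact absurd hG0det (not_le.2 hm₀pos)
    · rw [hGeq z hz]
      exact hginv z hz
  -- the contraction homotopy
  refine ⟨⟨G 0, hGunit 0⟩, ⟨{
      toFun := fun p => ⟨G ((1 - (p.1 : ℝ)) • p.2.val), hGunit _⟩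
      continuous_toFun := ?_
      map_zero_left := ?_
      map_one_left := ?_ }⟩⟩
  · apply Continuous.subtype_mk
    exact hGcont.comp (((continuous_const.sub
      (continuous_subtype_val.comp continuous_fst)).smul
      (continuous_subtype_val.comp continuous_snd)))
  · intro x
    apply Subtype.ext
    show G ((1 - ((0 : unitInterval) : ℝ)) • x.val) = _
    rw [show ((0 : unitInterval) : ℝ) = 0 from rfl, sub_zero, one_smul, hGeq x.val x.2, hgc x]
  · intro x
    apply Subtype.ext
    show G ((1 - ((1 : unitInterval) : ℝ)) • x.val) = G 0
    rw [show ((1 : unitInterval) : ℝ) = 1 from rfl, sub_self, zero_smul]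

end HoloGLAux


/-- Any two holomorphic maps `g₀ g₁ : ℂ^m \ {0} → GL(n, ℂ)`
(`m ≥ 2`) are homotopic as continuous maps. -/
theorem holomorphic_maps_into_GL_homotopic (m n : ℕ) (hm : 2 ≤ m)
    (g₀ g₁ : (Fin m → ℂ) → Matrix (Fin n) (Fin n) ℂ)
    (hg₀ : ∀ i j, DifferentiableOn ℂ (fun z => g₀ z i j) {0}ᶜ)
    (hg₁ : ∀ i j, DifferentiableOn ℂ (fun z => g₁ z i j) {0}ᶜ)
    (hg₀inv : ∀ z : Fin m → ℂ, z ≠ 0 → IsUnit (g₀ z))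
    (hg₁inv : ∀ z : Fin m → ℂ, z ≠ 0 → IsUnit (g₁ z))
    (gc₀ gc₁ : C({z : Fin m → ℂ // z ≠ 0}, {A : Matrix (Fin n) (Fin n) ℂ // IsUnit A}))
    (hgc₀ : ∀ z : {z : Fin m → ℂ // z ≠ 0}, (gc₀ z : Matrix (Fin n) (Fin n) ℂ) = g₀ z.val)
    (hgc₁ : ∀ z : {z : Fin m → ℂ // z ≠ 0}, (gc₁ z : Matrix (Fin n) (Fin n) ℂ) = g₁ z.val) :
    gc₀.Homotopic gc₁ := by
  obtain ⟨c₀, h₀⟩ := HoloGLAux.nullhomotopic m n hm g₀ hg₀ hg₀inv gc₀ hgc₀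
  obtain ⟨c₁, h₁⟩ := HoloGLAux.nullhomotopic m n hm g₁ hg₁ hg₁inv gc₁ hgc₁
  exact h₀.trans ((HoloGLAux.const_homotopic c₀ c₁).trans h₁.symm)
end

section
/- Let m ≥ 2, n ≥ 1, and let f : ℂ^m \ {0} → M(n, ℂ) be holomorphic with f(z) invertible for every z ≠ 0. Let f̃ : ℂ^m → M(n, ℂ) be its holomorphic extension given by Hartogs' theorem. Then the map H : (ℂ^m \ {0}) × [0,1] → GL(n, ℂ) given by H(z, t) = f̃(tz) is a well-defined continuous homotopy from the constant map with value f̃(0) ∈ GL(n, ℂ) to f. -/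
open Set Metric

theorem aux_det_ne_zero (m : ℕ) (i0 i1 : Fin m) (hi01 : i0 ≠ i1)
    (d : (Fin m → ℂ) → ℂ) (hd : Continuous d)
    (hdiff : ∀ b : ℂ, b ≠ 0 → Differentiable ℂ (fun a : ℂ =>
      (d (a • (Pi.single i0 (1:ℂ) : Fin m → ℂ) + b • (Pi.single i1 (1:ℂ) : Fin m → ℂ)))⁻¹))
    (hne : ∀ z : Fin m → ℂ, z ≠ 0 → d z ≠ 0) : d 0 ≠ 0 := by
  set p : ℂ → ℂ → (Fin m → ℂ) :=
    fun a b => a • (Pi.single i0 (1:ℂ) : Fin m → ℂ) + b • (Pi.single i1 (1:ℂ) : Fin m → ℂ) with hp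
  have hpne : ∀ a b : ℂ, (a ≠ 0 ∨ b ≠ 0) → p a b ≠ 0 := by
    intro a b hab h0
    rcases hab with ha | hb
    · have := congrFun h0 i0
      simp [hp, Pi.single_eq_same, Pi.single_eq_of_ne hi01] at this
      exact ha this
    · have := congrFun h0 i1
      simp [hp, Pi.single_eq_same, Pi.single_eq_of_ne hi01.symm] at this
      exact hb this
  have hK : IsCompact ((sphere (0:ℂ) 1) ×ˢ (closedBall (0:ℂ) 1)) :=
    (isCompact_sphere 0 1).prod (isCompact_closedBall 0 1)
  have hKne : ((sphere (0:ℂ) 1) ×ˢ (closedBall (0:ℂ) 1)).Nonempty := ⟨(1, 0), by simp⟩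
  have hcont : Continuous fun q : ℂ × ℂ => ‖d (p q.1 q.2)‖ := by fun_prop
  obtain ⟨q, hqK, hq⟩ := hK.exists_isMinOn hKne hcont.continuousOn
  set c : ℝ := ‖d (p q.1 q.2)‖ with hc
  have hcpos : 0 < c := by
    have hq1 : p q.1 q.2 ≠ 0 := by
      apply hpne; left
      have h1 : q.1 ∈ sphere (0:ℂ) 1 := hqK.1
      simp only [mem_sphere_iff_norm, sub_zero] at h1
      intro h; rw [h] at h1; simp at h1
    simpa [hc, norm_pos_iff] using hne _ hq1
  have key : ∀ b : ℂ, b ≠ 0 → ‖b‖ ≤ 1 → c ≤ ‖d (p 0 b)‖ := by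
    intro b hb hb1
    have hmax : ‖(d (p 0 b))⁻¹‖ ≤ c⁻¹ := by
      apply Complex.norm_le_of_forall_mem_frontier_norm_le (isBounded_ball (x := (0:ℂ)) (r := 1))
        (f := fun a => (d (p a b))⁻¹)
      · exact (hdiff b hb).diffContOnCl
      · intro w hw
        rw [frontier_ball 0 one_ne_zero] at hw
        rw [norm_inv]
        have h1 : c ≤ ‖d (p w b)‖ := isMinOn_iff.mp hq (w, b) ⟨hw, by simpa using hb1⟩
        exact inv_anti₀ hcpos h1
      · exact subset_closure (by simp [mem_ball] : (0:ℂ) ∈ ball (0:ℂ) 1)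
    have hne0 : d (p 0 b) ≠ 0 := hne _ (hpne 0 b (Or.inr hb))
    rw [norm_inv] at hmax
    calc c = (c⁻¹)⁻¹ := by rw [inv_inv]
    _ ≤ (‖d (p 0 b)‖⁻¹)⁻¹ := inv_anti₀ (inv_pos.mpr (norm_pos_iff.mpr hne0)) hmax
    _ = ‖d (p 0 b)‖ := inv_inv _
  have hlim : Filter.Tendsto (fun b : ℂ => ‖d (p 0 b)‖) (nhdsWithin 0 {0}ᶜ) (nhds ‖d (p 0 0)‖) :=
    ((hd.comp (by fun_prop)).norm.tendsto 0).mono_left nhdsWithin_le_nhds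
  have hfin : c ≤ ‖d (p 0 0)‖ := by
    refine ge_of_tendsto hlim ?_
    filter_upwards [self_mem_nhdsWithin,
      inter_mem_nhdsWithin _ (closedBall_mem_nhds (0:ℂ) one_pos)] with b hb hb'
    exact key b hb (by simpa using hb'.2)
  have hp00 : p 0 0 = 0 := by simp [hp]
  rw [hp00] at hfin
  intro h
  rw [h] at hfin
  simp at hfin
  exact absurd hfin (not_le.mpr hcpos)


/-- Let `f : ℂ^m \ {0} → M(n, ℂ)` be holomorphic with invertible
values (`m ≥ 2`, `n ≥ 1`), and let `ftilde : ℂ^m → M(n, ℂ)` be its holomorphic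
extension (Hartogs). Then `H (z, t) = ftilde (t • z)` is a well-defined
continuous homotopy, through maps into `GL(n, ℂ)`, from the constant map with
value `ftilde 0 ∈ GL(n, ℂ)` to `f`. -/
theorem radial_homotopy_to_constant (m n : ℕ) (hm : 2 ≤ m) (hn : 1 ≤ n)
    (f ftilde : (Fin m → ℂ) → Matrix (Fin n) (Fin n) ℂ)
    (hf : ∀ i j, DifferentiableOn ℂ (fun z => f z i j) {0}ᶜ)
    (hfinv : ∀ z : Fin m → ℂ, z ≠ 0 → IsUnit (f z))
    (hft : ∀ i j, Differentiable ℂ (fun z => ftilde z i j))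
    (hext : ∀ z : Fin m → ℂ, z ≠ 0 → ftilde z = f z)
    (fc : C({z : Fin m → ℂ // z ≠ 0}, {A : Matrix (Fin n) (Fin n) ℂ // IsUnit A}))
    (hfc : ∀ z : {z : Fin m → ℂ // z ≠ 0}, (fc z : Matrix (Fin n) (Fin n) ℂ) = f z.val) :
    ∃ u : {A : Matrix (Fin n) (Fin n) ℂ // IsUnit A}, (u : Matrix (Fin n) (Fin n) ℂ) = ftilde 0 ∧
      ∃ H : ContinuousMap.Homotopy (ContinuousMap.const _ u) fc,
        ∀ (t : unitInterval) (z : {z : Fin m → ℂ // z ≠ 0}),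
          (H (t, z) : Matrix (Fin n) (Fin n) ℂ) = ftilde ((t : ℝ) • z.val) := by
  have i0 : Fin m := ⟨0, by omega⟩
  have hftc : Continuous ftilde := continuous_matrix fun i j => (hft i j).continuous
  set d : (Fin m → ℂ) → ℂ := fun z => (ftilde z).det with hd
  have hdc : Continuous d := hftc.matrix_det
  have hne : ∀ z : Fin m → ℂ, z ≠ 0 → d z ≠ 0 := by
    intro z hz
    have : IsUnit (ftilde z).det := by
      rw [hext z hz]; exact (Matrix.isUnit_iff_isUnit_det _).mp (hfinv z hz)
    exact this.ne_zero
  set e0 : Fin m → ℂ := Pi.single (⟨0, by omega⟩ : Fin m) (1:ℂ) with he0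
  set e1 : Fin m → ℂ := Pi.single (⟨1, by omega⟩ : Fin m) (1:ℂ) with he1
  have hi01 : (⟨0, by omega⟩ : Fin m) ≠ ⟨1, by omega⟩ := by simp [Fin.ext_iff]
  have hdiff : ∀ b : ℂ, b ≠ 0 → Differentiable ℂ (fun a : ℂ => (d (a • e0 + b • e1))⁻¹) := by
    intro b hb
    have hline : Differentiable ℂ (fun a : ℂ => a • e0 + b • e1) :=
      (differentiable_id.smul_const e0).add_const _
    have hdet : Differentiable ℂ (fun a : ℂ => d (a • e0 + b • e1)) := by
      simp only [hd, Matrix.det_apply']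
      exact Differentiable.fun_sum fun σ _ =>
        (Differentiable.fun_finset_prod fun i _ => ((hft (σ i) i).comp hline)).const_mul _
    refine hdet.inv fun a => hne _ ?_
    intro h0
    have := congrFun h0 ⟨1, by omega⟩
    simp [he0, he1, Pi.single_eq_same, Pi.single_eq_of_ne hi01.symm] at this
    exact hb this
  have hd0 : d 0 ≠ 0 := aux_det_ne_zero m ⟨0, by omega⟩ ⟨1, by omega⟩ hi01 d hdc hdiff hne
  have hu0 : IsUnit (ftilde 0) :=
    (Matrix.isUnit_iff_isUnit_det _).mpr (isUnit_iff_ne_zero.mpr hd0)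
  refine ⟨⟨ftilde 0, hu0⟩, rfl, ?_⟩
  have hunit : ∀ (t : unitInterval) (z : {z : Fin m → ℂ // z ≠ 0}),
      IsUnit (ftilde ((t : ℝ) • z.val)) := by
    intro t z
    rcases eq_or_ne (t : ℝ) 0 with ht | ht
    · rw [ht, zero_smul]; exact hu0
    · have hz : (t : ℝ) • z.val ≠ 0 := smul_ne_zero ht z.2
      rw [hext _ hz]; exact hfinv _ hz
  refine ⟨⟨⟨fun p => ⟨ftilde ((p.1 : ℝ) • p.2.val), hunit p.1 p.2⟩, ?_⟩, ?_, ?_⟩, fun t z => rfl⟩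
  · refine Continuous.subtype_mk ?_ _
    exact hftc.comp <| ((continuous_induced_dom.comp continuous_fst).fun_smul
      (continuous_subtype_val.comp continuous_snd))
  · intro z
    ext
    simp
  · intro z
    ext
    simp [hext _ z.2, hfc z]
end

section
/- For m ≥ 2, every holomorphic function g : ℂ^m \ {0} → ℂ \ {0} (i.e. holomorphic and nowhere vanishing) is nullhomotopic as a continuous map into ℂ \ {0}. -/
open Complex Metric Set Filter Function Topology MeasureTheory intervalIntegral Real

noncomputable section

/-- A continuous retraction of `ℂ` onto the closed ball of radius `1/2`. -/
private def halfRet (ζ : ℂ) : ℂ := (max 1 (2 * ‖ζ‖))⁻¹ • ζ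

private lemma halfRet_cont : Continuous halfRet := by
  refine Continuous.smul (Continuous.inv₀ (continuous_const.max
    (continuous_const.mul continuous_norm)) fun ζ => ?_) continuous_id
  have : (1:ℝ) ≤ max 1 (2 * ‖ζ‖) := le_max_left _ _
  exact ne_of_gt (lt_of_lt_of_le one_pos this)

private lemma halfRet_le (ζ : ℂ) : ‖halfRet ζ‖ ≤ 1/2 := by
  have h1 : (0:ℝ) < max 1 (2 * ‖ζ‖) :=
    lt_of_lt_of_le one_pos (le_max_left _ _)
  have : ‖halfRet ζ‖ = (max 1 (2 * ‖ζ‖))⁻¹ * ‖ζ‖ := by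
    simp [halfRet, abs_of_pos (inv_pos.2 h1)]
  rw [this]
  rcases le_total (2 * ‖ζ‖) 1 with h | h
  · rw [max_eq_left h]
    simp only [inv_one, one_mul]
    linarith
  · rw [max_eq_right h]
    rw [inv_mul_le_iff₀ (by linarith)]
    linarith [norm_nonneg ζ]

private lemma halfRet_eq {ζ : ℂ} (h : ‖ζ‖ ≤ 1/2) : halfRet ζ = ζ := by
  have : max 1 (2 * ‖ζ‖) = 1 := max_eq_left (by linarith)
  simp [halfRet, this]

variable {m : ℕ}

/-- The Cauchy-integral candidate extension, integrating in coordinate `i0`. -/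
private def Phi (i0 : Fin m) (f : (Fin m → ℂ) → ℂ) (z : Fin m → ℂ) : ℂ :=
  (2 * π * I : ℂ)⁻¹ • ∮ ζ in C(0, 1), (ζ - halfRet (z i0))⁻¹ • f (Function.update z i0 ζ)

private lemma update_ne_zero (i0 : Fin m) (z : Fin m → ℂ) (θ : ℝ) :
    Function.update z i0 (circleMap 0 1 θ) ≠ 0 := by
  intro h
  have h0 : circleMap 0 1 θ = 0 := by
    have := congrFun h i0
    simpa using this
  exact circleMap_ne_center one_ne_zero h0

private lemma kernel_ne_zero (w : ℂ) (θ : ℝ) : circleMap 0 1 θ - halfRet w ≠ 0 := by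
  intro h
  have h1 : ‖circleMap 0 1 θ‖ = 1 := by simp [norm_circleMap_zero]
  have h2 := halfRet_le w
  rw [sub_eq_zero] at h
  rw [h] at h1
  linarith

private lemma phi_continuous (i0 : Fin m) (f : (Fin m → ℂ) → ℂ)
    (hf : DifferentiableOn ℂ f {0}ᶜ) : Continuous (Phi i0 f) := by
  have key : Continuous fun z : Fin m → ℂ =>
      ∫ θ in (0:ℝ)..(2*π), deriv (circleMap 0 1) θ •
        ((circleMap 0 1 θ - halfRet (z i0))⁻¹ • f (Function.update z i0 (circleMap 0 1 θ))) := by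
    apply intervalIntegral.continuous_parametric_intervalIntegral_of_continuous'
    have hc1 : Continuous fun p : (Fin m → ℂ) × ℝ => deriv (circleMap 0 1) p.2 := by
      simp only [deriv_circleMap]
      exact ((continuous_circleMap 0 1).comp continuous_snd).mul continuous_const
    have hc2 : Continuous fun p : (Fin m → ℂ) × ℝ =>
        (circleMap 0 1 p.2 - halfRet (p.1 i0))⁻¹ :=
      Continuous.inv₀ (((continuous_circleMap 0 1).comp continuous_snd).sub
        (halfRet_cont.comp ((continuous_apply i0).comp continuous_fst)))
        fun p => kernel_ne_zero _ _
    have hupd : Continuous fun p : (Fin m → ℂ) × ℝ =>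
        Function.update p.1 i0 (circleMap 0 1 p.2) :=
      continuous_fst.update i0 ((continuous_circleMap 0 1).comp continuous_snd)
    have hc3 : Continuous fun p : (Fin m → ℂ) × ℝ =>
        f (Function.update p.1 i0 (circleMap 0 1 p.2)) := by
      rw [continuous_iff_continuousAt]
      intro p
      have hne : Function.update p.1 i0 (circleMap 0 1 p.2) ≠ 0 := update_ne_zero i0 _ _
      exact Filter.Tendsto.comp
        (hf.continuousOn.continuousAt (isOpen_compl_singleton.mem_nhds hne))
        hupd.continuousAt
    exact hc1.smul (hc2.smul hc3)
  unfold Phi circleIntegral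
  exact (continuous_const (y := (2 * π * I : ℂ)⁻¹)).smul key

private lemma phi_eq_of_slice (i0 : Fin m) (f : (Fin m → ℂ) → ℂ)
    (hf : DifferentiableOn ℂ f {0}ᶜ) (z : Fin m → ℂ) (hz0 : ‖z i0‖ < 1/2)
    (hzi : ∃ i, i ≠ i0 ∧ z i ≠ 0) : f z = Phi i0 f z := by
  obtain ⟨i, hi0, hzi⟩ := hzi
  have hud : Differentiable ℂ fun ζ : ℂ => Function.update z i0 ζ := fun ζ =>
    (hasFDerivAt_update (i := i0) z ζ).differentiableAt
  have hune : ∀ ζ : ℂ, Function.update z i0 ζ ≠ 0 := by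
    intro ζ h
    apply hzi
    have h2 := congrFun h i
    rwa [Function.update_of_ne hi0, Pi.zero_apply] at h2
  have hfd : DifferentiableOn ℂ (f ∘ fun ζ : ℂ => Function.update z i0 ζ)
      (closedBall 0 1) :=
    hf.comp (hud.differentiableOn) fun ζ _ => hune ζ
  have hwb : z i0 ∈ ball (0:ℂ) 1 := by
    rw [mem_ball, dist_zero_right]
    have : ‖z i0‖ < 1 := by linarith
    simpa using this
  have hC := hfd.circleIntegral_sub_inv_smul (w := z i0) hwb
  have hret : halfRet (z i0) = z i0 := halfRet_eq (le_of_lt hz0)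
  simp only [Function.comp_apply, Function.update_eq_self] at hC
  rw [Phi, hret, hC, smul_smul, inv_mul_cancel₀ Complex.two_pi_I_ne_zero, one_smul]

private lemma phi_eq (hm : 2 ≤ m) (i0 : Fin m) (f : (Fin m → ℂ) → ℂ)
    (hf : DifferentiableOn ℂ f {0}ᶜ) (z : Fin m → ℂ) (hz0 : ‖z i0‖ < 1/2)
    (hz : z ≠ 0) : f z = Phi i0 f z := by
  by_cases hcase : ∃ i, i ≠ i0 ∧ z i ≠ 0
  · exact phi_eq_of_slice i0 f hf z hz0 hcase
  push_neg at hcase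
  -- all coordinates other than i0 vanish; approximate along another coordinate
  haveI : Nontrivial (Fin m) := Fin.nontrivial_iff_two_le.mpr hm
  obtain ⟨i1, hi1⟩ : ∃ i1 : Fin m, i1 ≠ i0 := exists_ne i0
  set φ : ℂ → (Fin m → ℂ) := fun t => z + Pi.single i1 t with hφ
  have hφc : Continuous φ := by
    have hsc : Continuous fun t : ℂ => (Pi.single i1 t : Fin m → ℂ) := by
      apply continuous_pi
      intro j
      by_cases hj : j = i1
      · subst hj
        simpa [Pi.single_eq_same] using (continuous_id' : Continuous fun t : ℂ => t)
      · simpa [Pi.single_eq_of_ne hj] using continuous_const (y := (0:ℂ))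
    exact continuous_const.add hsc
  have hφ0 : φ 0 = z := by simp [hφ]
  have heq : ∀ t : ℂ, t ≠ 0 → f (φ t) = Phi i0 f (φ t) := by
    intro t ht
    apply phi_eq_of_slice i0 f hf
    · have : φ t i0 = z i0 := by
        simp [hφ, Pi.single_eq_of_ne (Ne.symm hi1)]
      rw [this]; exact hz0
    · refine ⟨i1, hi1, ?_⟩
      have : φ t i1 = t := by simp [hφ, hcase i1 hi1]
      rw [this]; exact ht
  have hφt : Tendsto φ (𝓝 (0:ℂ)) (𝓝 z) := hφ0 ▸ (hφc.continuousAt (x := 0))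
  have hT1 : Tendsto (fun t => f (φ t)) (𝓝[≠] (0:ℂ)) (𝓝 (f z)) := by
    have hfz : ContinuousAt f z :=
      hf.continuousOn.continuousAt (isOpen_compl_singleton.mem_nhds hz)
    exact (Filter.Tendsto.comp hfz hφt).mono_left nhdsWithin_le_nhds
  have hT2 : Tendsto (fun t => f (φ t)) (𝓝[≠] (0:ℂ)) (𝓝 (Phi i0 f z)) := by
    have hφz := Filter.Tendsto.comp ((phi_continuous i0 f hf).continuousAt (x := z)) hφt
    refine (hφz.mono_left nhdsWithin_le_nhds).congr' ?_
    filter_upwards [self_mem_nhdsWithin] with t ht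
    exact (heq t ht).symm
  exact tendsto_nhds_unique hT1 hT2

/-- Mini-Hartogs: `f` has a limit at the puncture. -/
private lemma tendsto_phi (hm : 2 ≤ m) (f : (Fin m → ℂ) → ℂ)
    (hf : DifferentiableOn ℂ f {0}ᶜ) :
    ∃ c : ℂ, Tendsto f (𝓝[≠] (0 : Fin m → ℂ)) (𝓝 c) := by
  have h0m : 0 < m := by omega
  set i0 : Fin m := ⟨0, h0m⟩ with hi0
  refine ⟨Phi i0 f 0, ?_⟩
  have hS : IsOpen {z : Fin m → ℂ | ‖z i0‖ < 1/2} := by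
    have : Continuous fun z : Fin m → ℂ => ‖z i0‖ :=
      continuous_norm.comp (continuous_apply i0)
    exact isOpen_lt this continuous_const
  have h0S : (0 : Fin m → ℂ) ∈ {z : Fin m → ℂ | ‖z i0‖ < 1/2} := by
    simp
  have hcont := (phi_continuous i0 f hf).continuousAt (x := (0 : Fin m → ℂ))
  refine (hcont.tendsto.mono_left nhdsWithin_le_nhds).congr' ?_
  filter_upwards [nhdsWithin_le_nhds (hS.mem_nhds h0S),
    self_mem_nhdsWithin] with z hz1 hz2
  exact (phi_eq hm i0 f hf z hz1 hz2).symm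

end

/-- For `m ≥ 2`, every holomorphic nowhere-vanishing function
`g : ℂ^m \ {0} → ℂ \ {0}` is nullhomotopic as a continuous map into `ℂ \ {0}`. -/
theorem holomorphic_nonvanishing_nullhomotopic (m : ℕ) (hm : 2 ≤ m)
    (g : (Fin m → ℂ) → ℂ)
    (hg : DifferentiableOn ℂ g {0}ᶜ)
    (gc : C({z : Fin m → ℂ // z ≠ 0}, {w : ℂ // w ≠ 0}))
    (hgc : ∀ z : {z : Fin m → ℂ // z ≠ 0}, (gc z : ℂ) = g z.val) :
    gc.Nullhomotopic := by
  classical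
  have hgz : ∀ z : Fin m → ℂ, z ≠ 0 → g z ≠ 0 := by
    intro z hz
    rw [← hgc ⟨z, hz⟩]
    exact (gc ⟨z, hz⟩).prop
  have hginv : DifferentiableOn ℂ (fun z => (g z)⁻¹) {0}ᶜ :=
    hg.inv fun z hz => hgz z hz
  obtain ⟨c, hTc⟩ := tendsto_phi hm g hg
  obtain ⟨c', hTc'⟩ := tendsto_phi hm (fun z => (g z)⁻¹) hginv
  haveI : Nonempty (Fin m) := ⟨⟨0, by omega⟩⟩
  haveI : Filter.NeBot (nhdsWithin (0 : Fin m → ℂ) {0}ᶜ) :=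
    Module.punctured_nhds_neBot ℂ (Fin m → ℂ) 0
  have hcc' : c * c' = 1 := by
    have h1 : Filter.Tendsto (fun z => g z * (g z)⁻¹)
        (nhdsWithin (0 : Fin m → ℂ) {0}ᶜ) (nhds (c * c')) := hTc.mul hTc'
    have h2 : Filter.Tendsto (fun z => g z * (g z)⁻¹)
        (nhdsWithin (0 : Fin m → ℂ) {0}ᶜ) (nhds 1) := by
      refine tendsto_const_nhds.congr' ?_
      filter_upwards [self_mem_nhdsWithin] with z hz
      exact (mul_inv_cancel₀ (hgz z hz)).symm
    exact tendsto_nhds_unique h1 h2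
  have hc : c ≠ 0 := left_ne_zero_of_mul_eq_one hcc'
  -- the continuous extension
  set h : (Fin m → ℂ) → ℂ := fun z => if z = 0 then c else g z with hh
  have hh0 : h 0 = c := if_pos rfl
  have hhz : ∀ z : Fin m → ℂ, z ≠ 0 → h z = g z := fun z hz => if_neg hz
  have hhne : ∀ z, h z ≠ 0 := by
    intro z
    by_cases hz : z = 0
    · rw [hz, hh0]; exact hc
    · rw [hhz z hz]; exact hgz z hz
  have hhcont : Continuous h := by
    rw [continuous_iff_continuousAt]
    intro z
    by_cases hz : z = 0
    · subst hz
      unfold ContinuousAt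
      rw [hh0, ← nhdsNE_sup_pure (0 : Fin m → ℂ)]
      rw [Filter.tendsto_sup]
      constructor
      · refine hTc.congr' ?_
        filter_upwards [self_mem_nhdsWithin] with z hz
        exact (hhz z hz).symm
      · have := tendsto_pure_nhds h (0 : Fin m → ℂ)
        rwa [hh0] at this
    · have hgc' : ContinuousAt g z :=
        hg.continuousOn.continuousAt (isOpen_compl_singleton.mem_nhds hz)
      refine hgc'.congr ?_
      filter_upwards [isOpen_compl_singleton.mem_nhds hz] with w hw
      exact (hhz w hw).symm
  -- build the homotopy to the constant c
  refine ⟨⟨c, hc⟩, ?_⟩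
  refine ⟨⟨⟨fun p => ⟨h ((1 - (p.1 : ℝ)) • (p.2 : Fin m → ℂ)), hhne _⟩, ?_⟩, ?_, ?_⟩⟩
  · refine Continuous.subtype_mk ?_ _
    exact hhcont.comp ((continuous_const.sub
      (continuous_subtype_val.comp continuous_fst)).smul
      (continuous_subtype_val.comp continuous_snd))
  · intro x
    apply Subtype.ext
    simp only [ContinuousMap.coe_mk]
    rw [hgc x]
    simp [hhz _ x.prop]
  · intro x
    apply Subtype.ext
    simp [hh0]
end
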